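/- Let T be a Euclidean minimum spanning tree on a finite planar point set V, let C be a cone with apex u of angle measure less than π/3, let uv be an edge of T contained in C, and let w ∈ V ∩ C with |uw| ≤ |uv| and w ≠ v. Then the graph obtained from T by deleting edge uv and adding edge uw is also a minimum spanning tree of V. -/

import Mathlib

/-! Deleting an edge `uv` from a tree leaves the component of `u` and that of `v`; adding an
edge `ab` with `a` on `u`'s side and `b` on `v`'s side gives a spanning tree of weight
`weight(T) - |uv| + |ab|`. By the law of cosines the angle condition forces `|vw| < |uv|`.
Were `w` on `u`'s side, exchanging `uv` for `wv` would give a lighter tree, so `w` is on `v`'s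
side, and exchanging `uv` for `uw` changes the weight by `|uw| - |uv| ≤ 0`. -/

open EuclideanGeometry Real Finset

/-- Total Euclidean length of the edges of a graph on a finite point set. -/
noncomputable def edgeWeight {V : Type*} [Fintype V]
    (p : V → EuclideanSpace ℝ (Fin 2)) (T : SimpleGraph V) : ℝ := by
  classical
  exact ∑ e ∈ T.edgeFinset,
    Sym2.lift ⟨fun a b => dist (p a) (p b), fun a b => by simp [dist_comm]⟩ e

/-- `T` is a Euclidean minimum spanning tree of the point set `p '' V`. -/
def IsEMST {V : Type*} [Fintype V] (p : V → EuclideanSpace ℝ (Fin 2))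
    (T : SimpleGraph V) : Prop :=
  T.Connected ∧ T.IsAcyclic ∧
    ∀ T' : SimpleGraph V, T'.Connected → T'.IsAcyclic → edgeWeight p T ≤ edgeWeight p T'

namespace SimpleGraph

variable {V : Type*} {G T : SimpleGraph V}

lemma Reachable.deleteEdges_or_exists_mem {x y : V} (h : G.Reachable x y) (e : Sym2 V) :
    (G.deleteEdges {e}).Reachable x y ∨ ∃ z ∈ e, (G.deleteEdges {e}).Reachable x z := by
  obtain ⟨W⟩ := h
  induction W with
  | nil => exact .inl .rfl
  | @cons x x' y hxx' _ ih =>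
    by_cases hxe : s(x, x') = e
    · exact .inr ⟨x, hxe ▸ Sym2.mem_mk_left x x', .rfl⟩
    · have hadj : (G.deleteEdges {e}).Adj x x' := by simp [hxx', hxe]
      exact ih.imp hadj.reachable.trans
        fun ⟨z, hz, hx'z⟩ => ⟨z, hz, hadj.reachable.trans hx'z⟩

lemma Reachable.deleteEdges_reachable_or {u v x : V} (h : G.Reachable u x) :
    (G.deleteEdges {s(u, v)}).Reachable u x ∨ (G.deleteEdges {s(u, v)}).Reachable v x := by
  rcases h.symm.deleteEdges_or_exists_mem s(u, v) with hxu | ⟨z, hz, hxz⟩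
  · exact .inl hxu.symm
  · rcases Sym2.mem_iff.mp hz with rfl | rfl
    · exact .inl hxz.symm
    · exact .inr hxz.symm

lemma fromEdgeSet_sdiff_union_eq_deleteEdges_sup_edge (e : Sym2 V) (a b : V) :
    fromEdgeSet ((T.edgeSet \ {e}) ∪ {s(a, b)}) = T.deleteEdges {e} ⊔ edge a b := by
  ext x y
  simp only [fromEdgeSet_adj, sup_adj, deleteEdges_adj, edge_adj, Set.mem_union, Set.mem_sdiff,
    Set.mem_singleton_iff, mem_edgeSet, Sym2.eq_iff]
  have := @Adj.ne _ T x y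
  tauto

variable {u v a b : V}

lemma IsAcyclic.not_reachable_deleteEdges (hT : T.IsAcyclic) (huv : T.Adj u v)
    (hua : (T.deleteEdges {s(u, v)}).Reachable u a)
    (hvb : (T.deleteEdges {s(u, v)}).Reachable v b) :
    ¬(T.deleteEdges {s(u, v)}).Reachable a b := fun hab =>
  isBridge_iff.mp (isAcyclic_iff_forall_adj_isBridge.mp hT huv) (hua.trans (hab.trans hvb.symm))

lemma IsAcyclic.deleteEdges_sup_edge (hT : T.IsAcyclic) (huv : T.Adj u v)
    (hua : (T.deleteEdges {s(u, v)}).Reachable u a)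
    (hvb : (T.deleteEdges {s(u, v)}).Reachable v b) :
    (T.deleteEdges {s(u, v)} ⊔ edge a b).IsAcyclic :=
  (hT.anti (deleteEdges_le _)).sup_edge_of_not_reachable (hT.not_reachable_deleteEdges huv hua hvb)

lemma Connected.deleteEdges_sup_edge (hT : T.Connected)
    (hua : (T.deleteEdges {s(u, v)}).Reachable u a)
    (hvb : (T.deleteEdges {s(u, v)}).Reachable v b) :
    (T.deleteEdges {s(u, v)} ⊔ edge a b).Connected := by
  set T' := T.deleteEdges {s(u, v)} ⊔ edge a b
  have hle : T.deleteEdges {s(u, v)} ≤ T' := le_sup_left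
  have hab : T'.Reachable a b := by
    by_cases h : a = b
    · exact h ▸ .rfl
    · exact Adj.reachable (.inr (by simp [edge_adj, h]))
  have hu : ∀ x, T'.Reachable u x := by
    intro x
    rcases (hT.preconnected u x).deleteEdges_reachable_or (v := v) with hux | hvx
    · exact hux.mono hle
    · exact ((hua.mono hle).trans hab).trans ((hvb.mono hle).symm.trans (hvx.mono hle))
  have : Nonempty V := hT.nonempty
  exact .mk fun x y => (hu x).symm.trans (hu y)

end SimpleGraph

lemma EuclideanGeometry.dist_lt_of_angle_lt_pi_div_three {V P : Type*} [NormedAddCommGroup V]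
    [InnerProductSpace ℝ V] [MetricSpace P] [NormedAddTorsor V P] {x y z : P}
    (hangle : ∠ y x z < π / 3) (hlen : dist x z ≤ dist x y) : dist y z < dist x y := by
  have hxy : 0 < dist x y := dist_pos.mpr <| by
    rintro rfl; rw [angle_self_left] at hangle; linarith [pi_pos]
  have hxz : 0 < dist x z := dist_pos.mpr <| by
    rintro rfl; rw [angle_self_right] at hangle; linarith [pi_pos]
  have hcos : 1 / 2 < cos (∠ y x z) := by
    rw [← cos_pi_div_three]
    exact cos_lt_cos_of_nonneg_of_le_pi (angle_nonneg _ _ _) (by linarith [pi_pos]) hangle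
  have hlaw := law_cos y x z
  rw [dist_comm y x, dist_comm z x] at hlaw
  refine lt_of_pow_lt_pow_left₀ 2 dist_nonneg ?_
  nlinarith [mul_pos hxy hxz]

noncomputable def edgeLength {V : Type*} (p : V → EuclideanSpace ℝ (Fin 2)) : Sym2 V → ℝ :=
  Sym2.lift ⟨fun a b => dist (p a) (p b), fun _ _ => dist_comm _ _⟩

section EMST

open SimpleGraph

variable {V : Type*} [Fintype V] (p : V → EuclideanSpace ℝ (Fin 2)) {T : SimpleGraph V}
  {u v a b : V}

lemma edgeWeight_eq_sum [Fintype T.edgeSet] :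
    edgeWeight p T = ∑ e ∈ T.edgeFinset, edgeLength p e := by
  unfold edgeWeight
  exact sum_congr (by congr!) fun _ _ => rfl

lemma edgeWeight_deleteEdges (huv : T.Adj u v) :
    edgeWeight p (T.deleteEdges {s(u, v)}) = edgeWeight p T - dist (p u) (p v) := by
  classical
  have : (T.deleteEdges {s(u, v)}).edgeFinset = T.edgeFinset.erase s(u, v) := by
    ext e; simp [and_comm]
  rw [edgeWeight_eq_sum, edgeWeight_eq_sum, this, sum_erase_eq_sub (by simpa using huv)]
  rfl

lemma edgeWeight_sup_edge (hab : a ≠ b) (h : ¬T.Adj a b) :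
    edgeWeight p (T ⊔ edge a b) = edgeWeight p T + dist (p a) (p b) := by
  classical
  rw [edgeWeight_eq_sum, edgeWeight_eq_sum, T.edgeFinset_sup_edge h hab, sum_cons, add_comm]
  rfl

lemma edgeWeight_deleteEdges_sup_edge (huv : T.Adj u v)
    (hab : ¬(T.deleteEdges {s(u, v)}).Reachable a b) :
    edgeWeight p (T.deleteEdges {s(u, v)} ⊔ edge a b) =
      edgeWeight p T - dist (p u) (p v) + dist (p a) (p b) := by
  rw [edgeWeight_sup_edge p (by rintro rfl; exact hab .rfl) (fun h => hab h.reachable),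
    edgeWeight_deleteEdges p huv]

variable {p}

lemma IsEMST.dist_le_of_reachable_deleteEdges (hT : IsEMST p T) (huv : T.Adj u v)
    (hua : (T.deleteEdges {s(u, v)}).Reachable u a)
    (hvb : (T.deleteEdges {s(u, v)}).Reachable v b) :
    dist (p u) (p v) ≤ dist (p a) (p b) := by
  have := hT.2.2 _ (hT.1.deleteEdges_sup_edge hua hvb) (hT.2.1.deleteEdges_sup_edge huv hua hvb)
  rw [edgeWeight_deleteEdges_sup_edge p huv (hT.2.1.not_reachable_deleteEdges huv hua hvb)] at this
  linarith

lemma IsEMST.deleteEdges_sup_edge (hT : IsEMST p T) (huv : T.Adj u v)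
    (hua : (T.deleteEdges {s(u, v)}).Reachable u a)
    (hvb : (T.deleteEdges {s(u, v)}).Reachable v b)
    (hle : dist (p a) (p b) ≤ dist (p u) (p v)) :
    IsEMST p (T.deleteEdges {s(u, v)} ⊔ edge a b) := by
  refine ⟨hT.1.deleteEdges_sup_edge hua hvb, hT.2.1.deleteEdges_sup_edge huv hua hvb,
    fun T' hc ha => ?_⟩
  rw [edgeWeight_deleteEdges_sup_edge p huv (hT.2.1.not_reachable_deleteEdges huv hua hvb)]
  linarith [hT.2.2 T' hc ha]

end EMST

theorem mst_swap_general {V : Type*} [Fintype V]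
    (p : V → EuclideanSpace ℝ (Fin 2))
    (T : SimpleGraph V) (hT : IsEMST p T)
    (u v w : V) (huv : T.Adj u v)
    (hcone : ∠ (p v) (p u) (p w) < π / 3)
    (hlen : dist (p u) (p w) ≤ dist (p u) (p v)) :
    IsEMST p (SimpleGraph.fromEdgeSet ((T.edgeSet \ {s(u, v)}) ∪ {s(u, w)})) := by
  rw [SimpleGraph.fromEdgeSet_sdiff_union_eq_deleteEdges_sup_edge]
  have hwv_lt : dist (p w) (p v) < dist (p u) (p v) := by
    rw [dist_comm (p w)]
    exact dist_lt_of_angle_lt_pi_div_three hcone hlen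
  rcases (hT.1.preconnected u w).deleteEdges_reachable_or (v := v) with huw | hvw
  · exact absurd (hT.dist_le_of_reachable_deleteEdges huv huw .rfl) hwv_lt.not_ge
  · exact hT.deleteEdges_sup_edge huv .rfl hvw hlen

/-- If `uv` is an MST edge lying in a cone of apex `u` with angle measure `< π/3`
(so any two points in the cone subtend an angle `< π/3` at `u`), and `w` is another point of
the cone with `|uw| ≤ |uv|`, then replacing `uv` by `uw` yields another minimum spanning
tree. -/
theorem mst_swap {V : Type*} [Fintype V]
    (p : V → EuclideanSpace ℝ (Fin 2)) (hp : Function.Injective p)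
    (T : SimpleGraph V) (hT : IsEMST p T)
    (u v w : V) (huv : T.Adj u v) (hwv : w ≠ v) (hwu : w ≠ u)
    (hcone : ∠ (p v) (p u) (p w) < π / 3)
    (hlen : dist (p u) (p w) ≤ dist (p u) (p v)) :
    IsEMST p (SimpleGraph.fromEdgeSet ((T.edgeSet \ {s(u, v)}) ∪ {s(u, w)})) :=
  mst_swap_general p T hT u v w huv hcone hlen
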